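/- Let R be a semihyperring with a multiplicative identity 1 and let I be a proper hyperideal of R. Then I is a semiprime hyperideal if and only if the complement R \ I is a p-system, i.e., for every a ∈ R \ I there exists r ∈ R such that a·r·a ∈ R \ I. -/

import Mathlib

/-- A semihyperring `(R, +, ·, 0)`: `+` is a hyperoperation (into nonempty sets),
`·` is an associative single-valued multiplication distributing over `+`,
and `0` is an additive identity and multiplicative absorbing element. -/
class Semihyperring (R : Type*) extends Mul R, Zero R where
  /-- hyperaddition -/
  hadd : R → R → Set R
  hadd_nonempty : ∀ a b : R, (hadd a b).Nonempty
  hadd_comm : ∀ a b : R, hadd a b = hadd b a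
  hadd_assoc : ∀ a b c : R, (⋃ x ∈ hadd a b, hadd x c) = ⋃ x ∈ hadd b c, hadd a x
  hadd_zero : ∀ a : R, hadd a 0 = {a}
  mul_assoc' : ∀ a b c : R, a * b * c = a * (b * c)
  left_distrib' : ∀ a b c : R, (fun x => a * x) '' hadd b c = hadd (a * b) (a * c)
  right_distrib' : ∀ a b c : R, (fun x => x * c) '' hadd a b = hadd (a * c) (b * c)
  mul_zero' : ∀ a : R, a * 0 = 0
  zero_mul' : ∀ a : R, 0 * a = 0

namespace Semihyperring

variable {R : Type*} [Semihyperring R]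

/-- Hyperaddition extended to sets: `A + B = ⋃_{a∈A, b∈B} (a + b)`. -/
def hAddSet (A B : Set R) : Set R := ⋃ a ∈ A, ⋃ b ∈ B, hadd a b

/-- The hypersum `x₁ + x₂ + ⋯ + xₙ` of a list of elements (as a set);
the empty hypersum is `{0}`, so `hSum [x] = {x}`. -/
def hSum : List R → Set R
  | [] => {0}
  | x :: xs => hAddSet {x} (hSum xs)

/-- A left hyperideal. -/
def IsLeftHyperideal (I : Set R) : Prop :=
  I.Nonempty ∧ (∀ a ∈ I, ∀ b ∈ I, hadd a b ⊆ I) ∧ ∀ a ∈ I, ∀ r : R, r * a ∈ I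

/-- A right hyperideal. -/
def IsRightHyperideal (I : Set R) : Prop :=
  I.Nonempty ∧ (∀ a ∈ I, ∀ b ∈ I, hadd a b ⊆ I) ∧ ∀ a ∈ I, ∀ r : R, a * r ∈ I

/-- A (two-sided) hyperideal. -/
def IsHyperideal (I : Set R) : Prop :=
  I.Nonempty ∧ (∀ a ∈ I, ∀ b ∈ I, hadd a b ⊆ I) ∧ ∀ a ∈ I, ∀ r : R, r * a ∈ I ∧ a * r ∈ I

/-- The product `HK`: union of all finite hypersums `a₁·b₁ + ⋯ + aₙ·bₙ` (n ≥ 1)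
with `aᵢ ∈ H`, `bᵢ ∈ K`. -/
def hProd (H K : Set R) : Set R :=
  ⋃ (l : List (R × R)) (_ : l ≠ []) (_ : ∀ p ∈ l, p.1 ∈ H ∧ p.2 ∈ K),
    hSum (l.map fun p => p.1 * p.2)

/-- The hyperideal generated by an element. -/
def genHyperideal (a : R) : Set R := ⋂₀ {I : Set R | IsHyperideal I ∧ a ∈ I}

/-- A prime hyperideal. -/
def IsPrimeHyperideal (P : Set R) : Prop :=
  IsHyperideal P ∧
    ∀ A B : Set R, IsHyperideal A → IsHyperideal B → hProd A B ⊆ P → A ⊆ P ∨ B ⊆ P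

/-- A semiprime hyperideal. -/
def IsSemiprimeHyperideal (I : Set R) : Prop :=
  IsHyperideal I ∧ ∀ H : Set R, IsHyperideal H → hProd H H ⊆ I → H ⊆ I

/-- A strongly irreducible hyperideal. -/
def IsStronglyIrreducibleHyperideal (I : Set R) : Prop :=
  IsHyperideal I ∧
    ∀ H K : Set R, IsHyperideal H → IsHyperideal K → H ∩ K ⊆ I → H ⊆ I ∨ K ⊆ I

/-- An irreducible hyperideal. -/
def IsIrreducibleHyperideal (I : Set R) : Prop :=
  IsHyperideal I ∧
    ∀ H K : Set R, IsHyperideal H → IsHyperideal K → I = H ∩ K → I = H ∨ I = K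

/-- `a·R`: the union of all finite hypersums `a·r₁ + ⋯ + a·rₙ` (n ≥ 1) with `rᵢ ∈ R`. -/
def rightMulSet (a : R) : Set R :=
  ⋃ (l : List R) (_ : l ≠ []), hSum (l.map fun r => a * r)

end Semihyperring

open Semihyperring


/-!
If `a ∉ I` but `a r a ∈ I` for every `r`, then `L = {y | a R y ⊆ I}` is a hyperideal
containing `a`, and so is `H = {x ∈ L | x L ⊆ I}` (for `a ∈ H` write `a y = a · 1 · y`).
Any two elements of `H` multiply into `I`, so `HH ⊆ I` while `H ⊄ I`. Conversely, if a
hyperideal `K` with `KK ⊆ I` contained some `x ∉ I`, then `x r x = (x r) x ∈ KK ⊆ I` for every `r`.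
-/

namespace Semihyperring

variable {R : Type*} [Semihyperring R]

theorem IsHyperideal.zero_mem {I : Set R} (hI : IsHyperideal I) : (0 : R) ∈ I := by
  obtain ⟨a, ha⟩ := hI.1
  simpa only [mul_zero'] using (hI.2.2 a ha 0).2

theorem hSum_singleton (x : R) : hSum [x] = {x} := by
  simp [hSum, hAddSet, hadd_zero]

theorem IsHyperideal.hSum_subset {I : Set R} (hI : IsHyperideal I) :
    ∀ {m : List R}, (∀ t ∈ m, t ∈ I) → hSum m ⊆ I
  | [], _ => by simpa [hSum] using hI.zero_mem
  | y :: ys, hm => by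
    intro x hx
    simp only [hSum, hAddSet, Set.mem_iUnion, Set.mem_singleton_iff] at hx
    obtain ⟨_, rfl, z, hz, hxz⟩ := hx
    exact hI.2.1 _ (hm _ List.mem_cons_self) z
      (hI.hSum_subset (fun t ht => hm t (List.mem_cons_of_mem _ ht)) hz) hxz

theorem hProd_subset_iff {H K I : Set R} (hI : IsHyperideal I) :
    hProd H K ⊆ I ↔ ∀ x ∈ H, ∀ y ∈ K, x * y ∈ I := by
  constructor
  · intro h x hx y hy
    apply h
    simp only [hProd, Set.mem_iUnion]
    exact ⟨[(x, y)], List.cons_ne_nil _ _, by simp [hx, hy], by simp [hSum_singleton]⟩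
  · intro h z hz
    simp only [hProd, Set.mem_iUnion] at hz
    obtain ⟨l, -, hl, hz⟩ := hz
    refine hI.hSum_subset ?_ hz
    simp only [List.mem_map]
    rintro _ ⟨p, hp, rfl⟩
    exact h _ (hl p hp).1 _ (hl p hp).2

theorem isSemiprimeHyperideal_iff {I : Set R} (hI : IsHyperideal I) :
    IsSemiprimeHyperideal I ↔
      ∀ H : Set R, IsHyperideal H → (∀ x ∈ H, ∀ y ∈ H, x * y ∈ I) → H ⊆ I := by
  simp only [IsSemiprimeHyperideal, hProd_subset_iff hI, hI, true_and]

theorem IsHyperideal.inter {H K : Set R} (hH : IsHyperideal H) (hK : IsHyperideal K) :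
    IsHyperideal (H ∩ K) :=
  ⟨⟨0, hH.zero_mem, hK.zero_mem⟩,
    fun a ha b hb => Set.subset_inter (hH.2.1 a ha.1 b hb.1) (hK.2.1 a ha.2 b hb.2),
    fun a ha r => ⟨⟨(hH.2.2 a ha.1 r).1, (hK.2.2 a ha.2 r).1⟩,
      ⟨(hH.2.2 a ha.1 r).2, (hK.2.2 a ha.2 r).2⟩⟩⟩

def leftColon (I S : Set R) : Set R := {x | ∀ y ∈ S, x * y ∈ I}

def rightColon (S I : Set R) : Set R := {y | ∀ x ∈ S, x * y ∈ I}

theorem isHyperideal_leftColon {I S : Set R} (hI : IsHyperideal I)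
    (hS : ∀ y ∈ S, ∀ r : R, r * y ∈ S) : IsHyperideal (leftColon I S) := by
  refine ⟨⟨0, fun y _ => by simpa only [zero_mul'] using hI.zero_mem⟩, ?_, ?_⟩
  · intro a ha b hb c hc y hy
    have hcy : c * y ∈ (fun x => x * y) '' hadd a b := ⟨c, hc, rfl⟩
    rw [right_distrib'] at hcy
    exact hI.2.1 _ (ha y hy) _ (hb y hy) hcy
  · intro a ha r
    refine ⟨fun y hy => ?_, fun y hy => ?_⟩
    · simpa only [mul_assoc'] using (hI.2.2 _ (ha y hy) r).1
    · simpa only [mul_assoc'] using ha _ (hS y hy r)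

theorem isHyperideal_rightColon {S I : Set R} (hI : IsHyperideal I)
    (hS : ∀ x ∈ S, ∀ r : R, x * r ∈ S) : IsHyperideal (rightColon S I) := by
  refine ⟨⟨0, fun x _ => by simpa only [mul_zero'] using hI.zero_mem⟩, ?_, ?_⟩
  · intro a ha b hb c hc x hx
    have hxc : x * c ∈ (fun y => x * y) '' hadd a b := ⟨c, hc, rfl⟩
    rw [left_distrib'] at hxc
    exact hI.2.1 _ (ha x hx) _ (hb x hx) hxc
  · intro a ha r
    refine ⟨fun x hx => ?_, fun x hx => ?_⟩
    · simpa only [mul_assoc'] using ha _ (hS x hx r)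
    · simpa only [mul_assoc'] using (hI.2.2 _ (ha x hx) r).2

theorem exists_isHyperideal_mem_of_forall_mul_mul_mem {one : R} (hone : ∀ x : R, x * one = x)
    {I : Set R} (hI : IsHyperideal I) {a : R} (ha : ∀ r : R, a * r * a ∈ I) :
    ∃ H : Set R, IsHyperideal H ∧ a ∈ H ∧ ∀ x ∈ H, ∀ y ∈ H, x * y ∈ I := by
  set L := rightColon (Set.range (a * ·)) I
  have hL : IsHyperideal L := isHyperideal_rightColon hI <| by
    rintro _ ⟨r, rfl⟩ s
    exact ⟨r * s, (mul_assoc' a r s).symm⟩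
  have haL : a ∈ L := by
    rintro _ ⟨r, rfl⟩
    exact ha r
  have hcolon : IsHyperideal (leftColon I L) :=
    isHyperideal_leftColon hI fun y hy r => (hL.2.2 y hy r).1
  refine ⟨L ∩ leftColon I L, hL.inter hcolon, ⟨haL, fun y hy => ?_⟩,
    fun x hx y hy => hx.2 y hy.1⟩
  simpa only [hone] using hy (a * one) ⟨one, rfl⟩

end Semihyperring

open Semihyperring

theorem semiprime_iff_compl_pSystem_general {R : Type*} [Semihyperring R]
    (one : R) (hone : ∀ x : R, one * x = x ∧ x * one = x)
    (I : Set R) (hI : IsHyperideal I) :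
    IsSemiprimeHyperideal I ↔ ∀ a : R, a ∉ I → ∃ r : R, a * r * a ∉ I := by
  rw [isSemiprimeHyperideal_iff hI]
  constructor
  · intro hsemiprime a haI
    by_contra! hsandwich
    obtain ⟨H, hH, haH, hmul⟩ :=
      exists_isHyperideal_mem_of_forall_mul_mul_mem (fun x => (hone x).2) hI hsandwich
    exact haI (hsemiprime H hH hmul haH)
  · intro hpSystem H hH hmul x hxH
    by_contra hxI
    obtain ⟨r, hr⟩ := hpSystem x hxI
    exact hr (hmul _ (hH.2.2 x hxH r).2 x hxH)

/-- a proper hyperideal of a semihyperring with identity is semiprime iff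
its complement is a p-system. -/
theorem semiprime_iff_compl_pSystem {R : Type*} [Semihyperring R]
    (one : R) (hone : ∀ x : R, one * x = x ∧ x * one = x)
    (I : Set R) (hI : IsHyperideal I) (hproper : I ≠ Set.univ) :
    IsSemiprimeHyperideal I ↔ ∀ a : R, a ∉ I → ∃ r : R, a * r * a ∉ I :=
  semiprime_iff_compl_pSystem_general one hone I hI
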